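/- Let K be a commutative ring with 2 invertible, a, b units, and A the quaternion algebra as above with the element R from the previous statement. Then R¹⊗xR²⊗R³ = R¹⊗R²⊗R³x for x ∈ {i, j, k}, hence for all x ∈ A. -/

import Mathlib

/-!
The elements `x` with `(1 ⊗ x ⊗ 1) R = R (1 ⊗ 1 ⊗ x)` form a subalgebra of `A`: the two sides
are `R` multiplied by the images of `x` under two algebra maps `A → A ⊗ A ⊗ A`. Since `k = ij`,
the quaternion algebra is generated by `i` and `j`, so it suffices to expand the identity for
`x = i` and `x = j`.
-/

open TensorProduct Quaternion

namespace QuaternionRMatrix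

variable (K : Type*) [CommRing K] (a b : K)

/-- The quaternion unit `i` in `ℍ[K, a, b]` (so `i² = a`). -/
noncomputable def qi : ℍ[K, a, b] := ⟨0, 1, 0, 0⟩

/-- The quaternion unit `j` in `ℍ[K, a, b]` (so `j² = b`). -/
noncomputable def qj : ℍ[K, a, b] := ⟨0, 0, 1, 0⟩

/-- The quaternion unit `k = ij` in `ℍ[K, a, b]`. -/
noncomputable def qk : ℍ[K, a, b] := ⟨0, 0, 0, 1⟩

variable [Invertible (2 : K)] [Invertible a] [Invertible b]

/-- The canonical R-matrix of the generalized quaternion algebra `A = ℍ[K, a, b]`: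
`R = (1/4)(1⊗1⊗1) + (1/4a)(1⊗i⊗i + i⊗1⊗i + i⊗i⊗1) + (1/4b)(1⊗j⊗j + j⊗1⊗j + j⊗j⊗1)
− (1/4ab)(1⊗k⊗k + k⊗1⊗k + k⊗k⊗1) + (1/4ab)(i⊗j⊗k + j⊗k⊗i + k⊗i⊗j)
− (1/4ab)(j⊗i⊗k + k⊗j⊗i + i⊗k⊗j)`. -/
noncomputable def R : ℍ[K, a, b] ⊗[K] ℍ[K, a, b] ⊗[K] ℍ[K, a, b] :=
  let i := qi K a b
  let j := qj K a b
  let k := qk K a b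
  let one : ℍ[K, a, b] := 1
  (⅟(2:K) * ⅟(2:K)) • (one ⊗ₜ[K] one ⊗ₜ[K] one)
  + (⅟(2:K) * ⅟(2:K) * ⅟a) •
      (one ⊗ₜ[K] i ⊗ₜ[K] i + i ⊗ₜ[K] one ⊗ₜ[K] i + i ⊗ₜ[K] i ⊗ₜ[K] one)
  + (⅟(2:K) * ⅟(2:K) * ⅟b) •
      (one ⊗ₜ[K] j ⊗ₜ[K] j + j ⊗ₜ[K] one ⊗ₜ[K] j + j ⊗ₜ[K] j ⊗ₜ[K] one)
  - (⅟(2:K) * ⅟(2:K) * ⅟a * ⅟b) •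
      (one ⊗ₜ[K] k ⊗ₜ[K] k + k ⊗ₜ[K] one ⊗ₜ[K] k + k ⊗ₜ[K] k ⊗ₜ[K] one)
  + (⅟(2:K) * ⅟(2:K) * ⅟a * ⅟b) •
      (i ⊗ₜ[K] j ⊗ₜ[K] k + j ⊗ₜ[K] k ⊗ₜ[K] i + k ⊗ₜ[K] i ⊗ₜ[K] j)
  - (⅟(2:K) * ⅟(2:K) * ⅟a * ⅟b) •
      (j ⊗ₜ[K] i ⊗ₜ[K] k + k ⊗ₜ[K] j ⊗ₜ[K] i + i ⊗ₜ[K] k ⊗ₜ[K] j)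

section Intertwiner

variable {S A B : Type*} [CommSemiring S] [Semiring A] [Semiring B] [Algebra S A] [Algebra S B]

def _root_.Subalgebra.intertwiner (f g : A →ₐ[S] B) (r : B) : Subalgebra S A where
  carrier := {x | f x * r = r * g x}
  mul_mem' {x y} hx hy := by
    simp only [Set.mem_ofPred_eq, map_mul] at *
    rw [mul_assoc, hy, ← mul_assoc, hx, mul_assoc]
  add_mem' hx hy := by
    simp only [Set.mem_ofPred_eq, map_add, add_mul, mul_add] at *
    rw [hx, hy]
  algebraMap_mem' c := by
    simp only [Set.mem_ofPred_eq, AlgHom.commutes, Algebra.commutes]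

@[simp]
theorem _root_.Subalgebra.mem_intertwiner {f g : A →ₐ[S] B} {r : B} {x : A} :
    x ∈ Subalgebra.intertwiner f g r ↔ f x * r = r * g x :=
  Iff.rfl

end Intertwiner

theorem _root_.QuaternionAlgebra.adjoin_i_j_eq_top {S : Type*} [CommRing S] (c₁ c₂ c₃ : S) :
    Algebra.adjoin S {(QuaternionAlgebra.Basis.self S).i, (QuaternionAlgebra.Basis.self S).j} =
      (⊤ : Subalgebra S ℍ[S,c₁,c₂,c₃]) := by
  set q := QuaternionAlgebra.Basis.self S (c₁ := c₁) (c₂ := c₂) (c₃ := c₃)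
  refine eq_top_iff.2 fun x _ => ?_
  have hi : q.i ∈ Algebra.adjoin S {q.i, q.j} := Algebra.subset_adjoin (by simp)
  have hj : q.j ∈ Algebra.adjoin S {q.i, q.j} := Algebra.subset_adjoin (by simp)
  have hx : x = algebraMap S _ x.re + x.imI • q.i + x.imJ • q.j + x.imK • (q.i * q.j) := by
    ext <;> simp [q]
  rw [hx]
  exact add_mem (add_mem (add_mem (algebraMap_mem _ _) (Subalgebra.smul_mem _ hi _))
    (Subalgebra.smul_mem _ hj _)) (Subalgebra.smul_mem _ (mul_mem hi hj) _)

open Algebra.TensorProduct in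
-- `⊗` associates to the left, so `1 ⊗ₜ x ⊗ₜ 1 = includeLeft (includeRight x)`.
theorem qi_qj_subset_intertwiner :
    {qi K a b, qj K a b} ⊆ (Subalgebra.intertwiner (includeLeft.comp includeRight) includeRight
      (R K a b) : Set ℍ[K, a, b]) := by
  have hi : qi K a b = (QuaternionAlgebra.Basis.self K).i := rfl
  have hj : qj K a b = (QuaternionAlgebra.Basis.self K).j := rfl
  have hk : qk K a b = (QuaternionAlgebra.Basis.self K).k := rfl
  rintro y (rfl | rfl) <;>
  · simp only [SetLike.mem_coe, Subalgebra.mem_intertwiner, AlgHom.comp_apply, includeLeft_apply,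
      includeRight_apply, R, hi, hj, hk, smul_add, mul_add, add_mul, mul_sub, sub_mul,
      mul_smul_comm, smul_mul_assoc, tmul_mul_tmul, one_mul, mul_one,
      QuaternionAlgebra.Basis.i_mul_i, QuaternionAlgebra.Basis.j_mul_j,
      QuaternionAlgebra.Basis.i_mul_j, QuaternionAlgebra.Basis.j_mul_i,
      QuaternionAlgebra.Basis.i_mul_k, QuaternionAlgebra.Basis.k_mul_i,
      QuaternionAlgebra.Basis.j_mul_k, QuaternionAlgebra.Basis.k_mul_j,
      zero_smul, add_zero, zero_sub, zero_mul, tmul_smul, ← smul_tmul', smul_smul, tmul_neg,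
      neg_tmul]
    -- each coefficient identity reduces to `⅟a * a = 1` or `⅟b * b = 1`
    match_scalars <;>
    · ring_nf
      try simp only [mul_right_comm _ (⅟b) a, invOf_mul_cancel_right]

/-- In the generalized quaternion algebra `ℍ[K, a, b]` over a
commutative ring `K` with `2`, `a`, `b` invertible, the explicit element `R` above
satisfies the centralizing condition `R¹ ⊗ xR² ⊗ R³ = R¹ ⊗ R² ⊗ R³x` for `x ∈ {i,j,k}`,
hence for all `x ∈ A`; equivalently `(1 ⊗ x ⊗ 1) · R = R · (1 ⊗ 1 ⊗ x)` in the
componentwise algebra `A ⊗ A ⊗ A`. -/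
theorem quaternion_R_matrix_centralizing :
    ∀ x : ℍ[K, a, b],
      ((1 : ℍ[K, a, b]) ⊗ₜ[K] x ⊗ₜ[K] (1 : ℍ[K, a, b])) * R K a b
        = R K a b * ((1 : ℍ[K, a, b]) ⊗ₜ[K] (1 : ℍ[K, a, b]) ⊗ₜ[K] x) := by
  intro x
  have hx : x ∈ Algebra.adjoin K {qi K a b, qj K a b} :=
    (QuaternionAlgebra.adjoin_i_j_eq_top a 0 b).ge Algebra.mem_top
  exact Algebra.adjoin_le (qi_qj_subset_intertwiner K a b) hx

end QuaternionRMatrix
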